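/- arXiv:2601.09891 — 4 statements merged into one kernel-verified Lean document; each statement's English description precedes it below -/
import Mathlib

section
/- Any solution a of the Berk–Nash equilibrium equation c'(a) = θ*(α*+a)/(α+a), with α > α*, satisfies a < (c')⁻¹(θ*); i.e., overconfident equilibrium effort is strictly below the effort a full-information agent with parameter θ* would choose. -/
theorem stmt_9 (α αstar θstar : ℝ)
    (hα : αstar < α) (hαstar : 0 < αstar) (hθstar : 0 < θstar)
    (c' : ℝ → ℝ)
    (hmono : StrictMonoOn c' (Set.Ici 0))
    (hc'0 : c' 0 = 0)
    (hsurj : Set.Ici (0:ℝ) ⊆ c' '' Set.Ici 0)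
    (a astar : ℝ) (ha : 0 ≤ a) (hastar : 0 ≤ astar)
    (heq : c' a = θstar * (αstar + a) / (α + a))
    (hfull : c' astar = θstar) :
    a < astar := by
  have hden : 0 < α + a := by linarith
  have h1 : c' a < c' astar := by
    rw [heq, hfull, div_lt_iff₀ hden]
    nlinarith
  exact (hmono.lt_iff_lt ha hastar).mp h1
end

section
/- In the monopolist example, if σ = 1 (always price 10), every KL minimizer in Θ = [33,40]×[3,3.5] satisfies α − 10β = 2, forcing β ∈ [3.1, 3.5] and α = 2 + 10β; for all such (α,β), 8α − 96β = 16 − 16β < 0, so price 2 strictly dominates price 10 and σ = 1 is not a Berk–Nash equilibrium. -/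
/-- KL objective of the monopolist example. -/
noncomputable def monoK (σ α β : ℝ) : ℝ :=
  (1/2) * (1 - σ) * (34 - (α - 2*β))^2 + (1/2) * σ * (2 - (α - 10*β))^2

def monoΘ : Set (ℝ × ℝ) := Set.Icc (33, 3) (40, 3.5)

theorem stmt_13 :
    (∀ α β : ℝ, (α, β) ∈ monoΘ →
      (∀ α' β' : ℝ, (α', β') ∈ monoΘ → monoK 1 α β ≤ monoK 1 α' β') → α - 10*β = 2) ∧
    (∀ α β : ℝ, (α, β) ∈ monoΘ → α - 10*β = 2 →
      (3.1 ≤ β ∧ β ≤ 3.5) ∧ α = 2 + 10*β ∧ 8*α - 96*β = 16 - 16*β ∧ 16 - 16*β < 0) := by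
  constructor
  · intro α β _ hmin
    have h := hmin 33 3.1 (by
      constructor <;> constructor <;> norm_num)
    simp only [monoK] at h
    nlinarith [sq_nonneg (2 - (α - 10*β)), h]
  · intro α β hmem heq
    obtain ⟨⟨h1, h2⟩, h3, h4⟩ := hmem
    simp only at h1 h2 h3 h4
    norm_num at h1 h2 h3 h4 ⊢
    constructor
    · constructor <;> linarith
    · constructor
      · linarith
      · constructor <;> linarith
end

section
/- Consider the one-dimensional differential inclusion on [0,1]: σ'(t) = 1−σ(t) when σ(t) < σ*, σ'(t) = −σ(t) when σ(t) > σ*, and σ'(t) ∈ [−σ(t), 1−σ(t)] when σ(t) = σ*, with σ* = 1/36. Then the singleton {σ*} is globally attracting: for every ε > 0 there exists T(ε) (independent of the initial condition) such that every absolutely continuous solution σ(·) with σ(0) ∈ [0,1] satisfies |σ(t) − σ*| ≤ ε for all t ≥ T(ε); in particular T(ε) ≤ 35 works for all ε ∈ (0, 1/36]. -/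
open MeasureTheory

/-- A solution of the differential inclusion for the monopolist example:
an absolutely continuous `σ : ℝ → ℝ` with values in `[0,1]` on `[0,∞)`, written as the
integral of a locally integrable velocity `v` which satisfies the inclusion a.e. -/
def IsDISolution (σstar : ℝ) (σ v : ℝ → ℝ) : Prop :=
  (∀ t ≥ (0:ℝ), σ t ∈ Set.Icc (0:ℝ) 1) ∧
  (∀ t ≥ (0:ℝ), IntervalIntegrable v volume 0 t) ∧
  (∀ t ≥ (0:ℝ), σ t = σ 0 + ∫ s in (0:ℝ)..t, v s) ∧
  (∀ᵐ s ∂(volume.restrict (Set.Ici (0:ℝ))),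
    (σ s < σstar → v s = 1 - σ s) ∧
    (σstar < σ s → v s = -(σ s)) ∧
    (σ s = σstar → v s ∈ Set.Icc (-(σ s)) (1 - σ s)))

namespace DIAux

variable {σ v : ℝ → ℝ}

/-- Continuity of a solution on `[0, b]`. -/
lemma contOn (h : IsDISolution (1/36) σ v) {b : ℝ} (hb : 0 ≤ b) :
    ContinuousOn σ (Set.Icc 0 b) := by
  obtain ⟨_, hint, hσ, _⟩ := h
  have hF : ContinuousOn (fun x => ∫ s in (0:ℝ)..x, v s) (Set.uIcc 0 b) :=
    intervalIntegral.continuousOn_primitive_interval' (hint b hb) Set.left_mem_uIcc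
  rw [Set.uIcc_of_le hb] at hF
  exact (continuousOn_const.add hF).congr fun x hx => hσ x hx.1

/-- The basic integral comparison: if `σ > 1/36` on `(a, b]` then σ decreases
at rate at least 1/36. -/
lemma decrease (h : IsDISolution (1/36) σ v) {a b : ℝ}
    (ha : 0 ≤ a) (hab : a ≤ b) (hgt : ∀ s ∈ Set.Ioc a b, (1:ℝ)/36 < σ s) :
    σ b ≤ σ a + (b - a) * (-(1/36)) := by
  obtain ⟨_, hint, hσ, hae⟩ := h
  have hb : 0 ≤ b := ha.trans hab
  have hv : IntervalIntegrable v volume a b := (hint a ha).symm.trans (hint b hb)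
  have hadd : σ b - σ a = ∫ s in a..b, v s := by
    rw [hσ b hb, hσ a ha]
    have := intervalIntegral.integral_add_adjacent_intervals (hint a ha) hv
    linarith
  have h1 := hae.filter_mono (ae_mono (Measure.restrict_mono
    (fun x (hx : x ∈ Set.Icc a b) => ha.trans hx.1) le_rfl))
  have h2 : ∀ᵐ s ∂(volume.restrict (Set.Icc a b)), s ∈ Set.Icc a b :=
    ae_restrict_mem measurableSet_Icc
  have h3 : ∀ᵐ s ∂(volume.restrict (Set.Icc a b)), s ≠ a := by
    refine ae_iff.mpr ?_
    have : {s : ℝ | ¬ s ≠ a} = {a} := by ext x; simp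
    rw [this]
    exact measure_singleton a
  have hmono : (∫ s in a..b, v s) ≤ ∫ _s in a..b, (-(1/36) : ℝ) := by
    refine intervalIntegral.integral_mono_ae_restrict hab hv intervalIntegrable_const ?_
    filter_upwards [h1, h2, h3] with s hs hmem hne
    have hsI : s ∈ Set.Ioc a b := ⟨lt_of_le_of_ne hmem.1 (Ne.symm hne), hmem.2⟩
    have hvs := hs.2.1 (hgt s hsI)
    have := hgt s hsI
    rw [hvs]; linarith
  rw [intervalIntegral.integral_const, smul_eq_mul] at hmono
  linarith

/-- If `σ < 1/36` on `(a, b]` then σ increases at rate at least 35/36. -/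
lemma increase (h : IsDISolution (1/36) σ v) {a b : ℝ}
    (ha : 0 ≤ a) (hab : a ≤ b) (hlt : ∀ s ∈ Set.Ioc a b, σ s < (1:ℝ)/36) :
    σ a + (b - a) * (35/36) ≤ σ b := by
  obtain ⟨_, hint, hσ, hae⟩ := h
  have hb : 0 ≤ b := ha.trans hab
  have hv : IntervalIntegrable v volume a b := (hint a ha).symm.trans (hint b hb)
  have hadd : σ b - σ a = ∫ s in a..b, v s := by
    rw [hσ b hb, hσ a ha]
    have := intervalIntegral.integral_add_adjacent_intervals (hint a ha) hv
    linarith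
  have h1 := hae.filter_mono (ae_mono (Measure.restrict_mono
    (fun x (hx : x ∈ Set.Icc a b) => ha.trans hx.1) le_rfl))
  have h2 : ∀ᵐ s ∂(volume.restrict (Set.Icc a b)), s ∈ Set.Icc a b :=
    ae_restrict_mem measurableSet_Icc
  have h3 : ∀ᵐ s ∂(volume.restrict (Set.Icc a b)), s ≠ a := by
    refine ae_iff.mpr ?_
    have : {s : ℝ | ¬ s ≠ a} = {a} := by ext x; simp
    rw [this]
    exact measure_singleton a
  have hmono : (∫ _s in a..b, ((35:ℝ)/36)) ≤ ∫ s in a..b, v s := by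
    refine intervalIntegral.integral_mono_ae_restrict hab intervalIntegrable_const hv ?_
    filter_upwards [h1, h2, h3] with s hs hmem hne
    have hsI : s ∈ Set.Ioc a b := ⟨lt_of_le_of_ne hmem.1 (Ne.symm hne), hmem.2⟩
    have hvs := hs.1 (hlt s hsI)
    have := hlt s hsI
    rw [hvs]; linarith
  rw [intervalIntegral.integral_const, smul_eq_mul] at hmono
  linarith

/-- The solution hits `1/36` somewhere in `[0, 35]`. -/
lemma hits (h : IsDISolution (1/36) σ v) :
    ∃ t1 ∈ Set.Icc (0:ℝ) 35, σ t1 = 1/36 := by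
  by_contra hne
  push_neg at hne
  have hc : ContinuousOn σ (Set.Icc 0 35) := contOn h (by norm_num)
  have hrange := h.1
  rcases lt_or_gt_of_ne (hne 0 ⟨le_refl 0, by norm_num⟩) with h0 | h0
  · -- σ 0 < 1/36 : show σ < 1/36 on all of [0,35], then σ grows too much
    have hall : ∀ s ∈ Set.Icc (0:ℝ) 35, σ s < 1/36 := by
      intro s hs
      rcases lt_or_gt_of_ne (hne s hs) with h' | h'
      · exact h'
      · exfalso
        have hIVT := intermediate_value_Icc hs.1 (hc.mono (Set.Icc_subset_Icc le_rfl hs.2))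
        have : (1:ℝ)/36 ∈ Set.Icc (σ 0) (σ s) := ⟨h0.le, h'.le⟩
        obtain ⟨c, hc1, hc2⟩ := hIVT this
        exact hne c ⟨hc1.1, hc1.2.trans hs.2⟩ hc2
    have := increase h (le_refl 0) (by norm_num : (0:ℝ) ≤ 35)
      (fun s hs => hall s ⟨hs.1.le, hs.2⟩)
    have h35 := (hrange 35 (by norm_num)).2
    have h00 := (hrange 0 (le_refl 0)).1
    linarith
  · -- σ 0 > 1/36 : show σ > 1/36 on all of [0,35], then σ decreases below 1/36
    have hall : ∀ s ∈ Set.Icc (0:ℝ) 35, (1:ℝ)/36 < σ s := by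
      intro s hs
      rcases lt_or_gt_of_ne (hne s hs) with h' | h'
      · exfalso
        have hIVT := intermediate_value_Icc' hs.1 (hc.mono (Set.Icc_subset_Icc le_rfl hs.2))
        have : (1:ℝ)/36 ∈ Set.Icc (σ s) (σ 0) := ⟨h'.le, h0.le⟩
        obtain ⟨c, hc1, hc2⟩ := hIVT this
        exact hne c ⟨hc1.1, hc1.2.trans hs.2⟩ hc2
      · exact h'
    have := decrease h (le_refl 0) (by norm_num : (0:ℝ) ≤ 35)
      (fun s hs => hall s ⟨hs.1.le, hs.2⟩)
    have h01 := (hrange 0 (le_refl 0)).2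
    have h35 := hall 35 ⟨by norm_num, le_refl 35⟩
    linarith

/-- Invariance: once the solution is at `1/36`, it stays there. -/
lemma stays (h : IsDISolution (1/36) σ v) {t1 t : ℝ}
    (ht1 : 0 ≤ t1) (ht1t : t1 ≤ t) (hσt1 : σ t1 = 1/36) : σ t = 1/36 := by
  by_contra hne
  have ht : 0 ≤ t := ht1.trans ht1t
  have hc : ContinuousOn σ (Set.Icc 0 t) := contOn h ht
  set S : Set ℝ := Set.Icc t1 t ∩ σ ⁻¹' {1/36} with hS
  have hSne : S.Nonempty := ⟨t1, ⟨le_refl t1, ht1t⟩, hσt1⟩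
  have hScomp : IsCompact S := by
    refine (isCompact_Icc : IsCompact (Set.Icc t1 t)).of_isClosed_subset ?_ Set.inter_subset_left
    exact (hc.mono (Set.Icc_subset_Icc ht1 le_rfl)).preimage_isClosed_of_isClosed
      isClosed_Icc isClosed_singleton
  have ht2S : sSup S ∈ S := hScomp.sSup_mem hSne
  set t2 := sSup S with ht2
  have ht2mem : t2 ∈ Set.Icc t1 t := ht2S.1
  have hσt2 : σ t2 = 1/36 := ht2S.2
  have ht2lt : t2 < t := lt_of_le_of_ne ht2mem.2 (fun hh => hne (hh ▸ hσt2))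
  have ht20 : 0 ≤ t2 := ht1.trans ht2mem.1
  have hnot : ∀ s ∈ Set.Ioc t2 t, σ s ≠ 1/36 := by
    intro s hs hcontra
    have hsS : s ∈ S := ⟨⟨ht2mem.1.trans hs.1.le, hs.2⟩, hcontra⟩
    exact absurd (le_csSup (hScomp.bddAbove) hsS) (not_le.mpr hs.1)
  rcases lt_or_gt_of_ne hne with hlt | hgt
  · -- σ t < 1/36 : then σ < 1/36 on (t2, t], so σ increases, contradiction
    have hall : ∀ s ∈ Set.Ioc t2 t, σ s < 1/36 := by
      intro s hs
      rcases lt_or_gt_of_ne (hnot s hs) with h' | h'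
      · exact h'
      · exfalso
        have hIVT := intermediate_value_Icc' hs.2
          (hc.mono (Set.Icc_subset_Icc (ht20.trans hs.1.le) le_rfl))
        obtain ⟨c, hc1, hc2⟩ := hIVT ⟨hlt.le, h'.le⟩
        exact hnot c ⟨lt_of_lt_of_le hs.1 hc1.1, hc1.2⟩ hc2
    have := increase h ht20 ht2lt.le hall
    rw [hσt2] at this
    nlinarith [ht2lt]
  · -- σ t > 1/36 : then σ > 1/36 on (t2, t], so σ decreases, contradiction
    have hall : ∀ s ∈ Set.Ioc t2 t, (1:ℝ)/36 < σ s := by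
      intro s hs
      rcases lt_or_gt_of_ne (hnot s hs) with h' | h'
      · exfalso
        have hIVT := intermediate_value_Icc hs.2
          (hc.mono (Set.Icc_subset_Icc (ht20.trans hs.1.le) le_rfl))
        obtain ⟨c, hc1, hc2⟩ := hIVT ⟨h'.le, hgt.le⟩
        exact hnot c ⟨lt_of_lt_of_le hs.1 hc1.1, hc1.2⟩ hc2
      · exact h'
    have := decrease h ht20 ht2lt.le hall
    rw [hσt2] at this
    nlinarith [ht2lt]

end DIAux

theorem stmt_15 :
    ∀ ε > (0:ℝ), ∃ T : ℝ, (ε ≤ 1/36 → T ≤ 35) ∧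
      ∀ σ v : ℝ → ℝ, IsDISolution (1/36) σ v →
        ∀ t ≥ T, |σ t - 1/36| ≤ ε := by
  intro ε hε
  refine ⟨35, fun _ => le_refl 35, fun σ v h t ht => ?_⟩
  obtain ⟨t1, ht1mem, ht1⟩ := DIAux.hits h
  have := DIAux.stays h ht1mem.1 (ht1mem.2.trans ht) ht1
  rw [this]
  simpa using hε.le
end

section
/- Suppose the scaled log-likelihood ratio satisfies the uniform bound sup_{θ∈Θ} |t⁻¹ Lₜ(θ) + K(θ)| ≤ εₜ with εₜ → 0, where K : Θ → [0,∞) is continuous on compact Θ with minimum K^m, the prior μ₀ has full support, and the posterior satisfies μₜ(B) = ∫_B e^{Lₜ(θ)} μ₀(dθ) / ∫_Θ e^{Lₜ(θ)} μ₀(dθ). Then for every closed C ⊆ Θ disjoint from the minimizer set Θ^m of K, there is a constant L < ∞ and ρ_C > 0 such that μₜ(C) ≤ L·e^{−t(ρ_C/2 − 2εₜ)} for all t. -/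
open MeasureTheory Filter

theorem stmt_19 {Θ : Type*} [MetricSpace Θ] [CompactSpace Θ]
    [MeasurableSpace Θ] [BorelSpace Θ]
    (μ₀ : Measure Θ) [IsProbabilityMeasure μ₀]
    (hfull : ∀ U : Set Θ, IsOpen U → U.Nonempty → 0 < μ₀ U)
    (K : Θ → ℝ) (hKcont : Continuous K) (hKnonneg : ∀ θ, 0 ≤ K θ)
    (Θm : Set Θ) (hΘm : Θm = {θ | ∀ θ', K θ ≤ K θ'})
    (L : ℕ → Θ → ℝ) (hLmeas : ∀ t, Measurable (L t))
    (hLint : ∀ t, Integrable (fun θ => Real.exp (L t θ)) μ₀)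
    (ε : ℕ → ℝ) (hεnonneg : ∀ t, 0 ≤ ε t) (hε : Tendsto ε atTop (nhds 0))
    (hunif : ∀ t : ℕ, ∀ θ : Θ, |(t : ℝ)⁻¹ * L t θ + K θ| ≤ ε t)
    (μt : ℕ → Set Θ → ℝ)
    (hpost : ∀ t : ℕ, ∀ B : Set Θ, MeasurableSet B →
      μt t B = (∫ θ in B, Real.exp (L t θ) ∂μ₀) / ∫ θ, Real.exp (L t θ) ∂μ₀) :
    ∀ C : Set Θ, IsClosed C → Disjoint C Θm →
      ∃ (Lc : ℝ) (ρC : ℝ), 0 < ρC ∧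
        ∀ t : ℕ, μt t C ≤ Lc * Real.exp (-(t : ℝ) * (ρC / 2 - 2 * ε t)) := by
  intro C hCclosed hCdisj
  -- trivial case: C empty
  rcases C.eq_empty_or_nonempty with hCe | hCne
  · refine ⟨1, 1, one_pos, fun t => ?_⟩
    rw [hpost t C (hCclosed.measurableSet), hCe]
    simp [Real.exp_pos, le_of_lt (Real.exp_pos _)]
  -- C nonempty, hence Θ nonempty
  have : Nonempty Θ := ⟨hCne.some⟩
  obtain ⟨θm, -, hθm⟩ := isCompact_univ.exists_isMinOn (Set.univ_nonempty)
    hKcont.continuousOn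
  have hCcomp : IsCompact C := hCclosed.isCompact
  obtain ⟨θC, hθCC, hθC⟩ := hCcomp.exists_isMinOn hCne hKcont.continuousOn
  set ρC : ℝ := K θC - K θm with hρC
  have hρpos : 0 < ρC := by
    have hnot : θC ∉ Θm := Set.disjoint_left.mp hCdisj hθCC
    rw [hΘm] at hnot
    simp only [Set.mem_setOf_eq, not_forall, not_le] at hnot
    obtain ⟨θ', hθ'⟩ := hnot
    have h2 : K θm ≤ K θ' := hθm (Set.mem_univ θ')
    simp only [hρC]
    linarith
  set A : Set Θ := K ⁻¹' (Set.Iio (K θm + ρC / 2)) with hA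
  have hAopen : IsOpen A := (isOpen_Iio).preimage hKcont
  have hAne : A.Nonempty := ⟨θm, by simp [hA]; linarith⟩
  have hApos : 0 < (μ₀ A).toReal :=
    ENNReal.toReal_pos (hfull A hAopen hAne).ne' (measure_ne_top _ _)
  refine ⟨((μ₀ A).toReal)⁻¹, ρC, hρpos, fun t => ?_⟩
  have hAmeas : MeasurableSet A := hAopen.measurableSet
  have hCmeas : MeasurableSet C := hCclosed.measurableSet
  have hZpos : 0 < ∫ θ, Real.exp (L t θ) ∂μ₀ := integral_exp_pos (hLint t)
  have hnumnn : 0 ≤ ∫ θ in C, Real.exp (L t θ) ∂μ₀ :=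
    setIntegral_nonneg hCmeas (fun θ _ => (Real.exp_pos _).le)
  have hLcge : 1 ≤ ((μ₀ A).toReal)⁻¹ := by
    rw [le_inv_comm₀ one_pos hApos]
    simpa using (ENNReal.toReal_mono (measure_ne_top μ₀ Set.univ) (measure_mono (Set.subset_univ A)))
  rcases Nat.eq_zero_or_pos t with ht0 | htpos
  · -- t = 0 : bound by 1 ≤ Lc
    subst ht0
    rw [hpost 0 C hCmeas]
    have hnum_le : ∫ θ in C, Real.exp (L 0 θ) ∂μ₀ ≤ ∫ θ, Real.exp (L 0 θ) ∂μ₀ :=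
      setIntegral_le_integral (hLint 0) (Filter.Eventually.of_forall fun θ => (Real.exp_pos _).le)
    have h1 : (∫ θ in C, Real.exp (L 0 θ) ∂μ₀) / ∫ θ, Real.exp (L 0 θ) ∂μ₀ ≤ 1 :=
      (div_le_one hZpos).mpr hnum_le
    calc _ ≤ (1 : ℝ) := h1
      _ ≤ ((μ₀ A).toReal)⁻¹ * Real.exp (-(0 : ℕ) * (ρC / 2 - 2 * ε 0)) := by
          simp; exact hLcge
  · have htR : (0 : ℝ) < (t : ℝ) := Nat.cast_pos.mpr htpos
    have hub : ∀ θ, L t θ ≤ (t : ℝ) * (ε t - K θ) := fun θ => by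
      have := (abs_le.mp (hunif t θ)).2
      have h2 : (t : ℝ)⁻¹ * L t θ ≤ ε t - K θ := by linarith
      calc L t θ = (t : ℝ) * ((t : ℝ)⁻¹ * L t θ) := by field_simp
        _ ≤ (t : ℝ) * (ε t - K θ) := by
            exact mul_le_mul_of_nonneg_left h2 htR.le
    have hlb : ∀ θ, (t : ℝ) * (-(ε t) - K θ) ≤ L t θ := fun θ => by
      have := (abs_le.mp (hunif t θ)).1
      have h2 : -(ε t) - K θ ≤ (t : ℝ)⁻¹ * L t θ := by linarith
      calc (t : ℝ) * (-(ε t) - K θ) ≤ (t : ℝ) * ((t : ℝ)⁻¹ * L t θ) :=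
            mul_le_mul_of_nonneg_left h2 htR.le
        _ = L t θ := by field_simp
    -- numerator bound
    have hnum : ∫ θ in C, Real.exp (L t θ) ∂μ₀
        ≤ Real.exp ((t : ℝ) * (ε t - K θC)) := by
      have h1 : ∫ θ in C, Real.exp (L t θ) ∂μ₀
          ≤ ∫ _ in C, Real.exp ((t : ℝ) * (ε t - K θC)) ∂μ₀ := by
        refine setIntegral_mono_on ((hLint t).integrableOn) ((integrableOn_const_iff).mpr ?_)
          hCmeas (fun θ hθ => ?_)
        · right; exact measure_lt_top _ _
        · exact Real.exp_le_exp.mpr (le_trans (hub θ)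
            (by have := hθC hθ; simp only [Set.mem_setOf_eq] at this; nlinarith))
      rw [setIntegral_const] at h1
      refine h1.trans ?_
      have hCle1 : (μ₀ C).toReal ≤ 1 := by
        simpa using (ENNReal.toReal_mono (measure_ne_top μ₀ Set.univ) (measure_mono (Set.subset_univ C)))
      have := Real.exp_pos ((t : ℝ) * (ε t - K θC))
      calc (μ₀ C).toReal • Real.exp ((t : ℝ) * (ε t - K θC))
          = (μ₀ C).toReal * Real.exp ((t : ℝ) * (ε t - K θC)) := by rw [smul_eq_mul]
        _ ≤ 1 * Real.exp ((t : ℝ) * (ε t - K θC)) := by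
            exact mul_le_mul_of_nonneg_right hCle1 this.le
        _ = _ := one_mul _
    -- denominator bound
    have hden : (μ₀ A).toReal * Real.exp ((t : ℝ) * (-(ε t) - K θC + ρC / 2))
        ≤ ∫ θ, Real.exp (L t θ) ∂μ₀ := by
      have h1 : ∫ _ in A, Real.exp ((t : ℝ) * (-(ε t) - K θC + ρC / 2)) ∂μ₀
          ≤ ∫ θ in A, Real.exp (L t θ) ∂μ₀ := by
        refine setIntegral_mono_on ((integrableOn_const_iff).mpr ?_)
          ((hLint t).integrableOn) hAmeas (fun θ hθ => ?_)
        · right; exact measure_lt_top _ _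
        · refine Real.exp_le_exp.mpr (le_trans ?_ (hlb θ))
          have hθA : K θ < K θm + ρC / 2 := hθ
          have : -(ε t) - K θC + ρC / 2 ≤ -(ε t) - K θ := by
            simp only [hρC] at hθA ⊢; linarith
          nlinarith
      rw [setIntegral_const, smul_eq_mul] at h1
      refine h1.trans ?_
      exact setIntegral_le_integral (hLint t)
        (Filter.Eventually.of_forall fun θ => (Real.exp_pos _).le)
    have hdpos : 0 < (μ₀ A).toReal * Real.exp ((t : ℝ) * (-(ε t) - K θC + ρC / 2)) :=
      mul_pos hApos (Real.exp_pos _)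
    rw [hpost t C hCmeas]
    have hdiv : (∫ θ in C, Real.exp (L t θ) ∂μ₀) / ∫ θ, Real.exp (L t θ) ∂μ₀
        ≤ Real.exp ((t : ℝ) * (ε t - K θC)) /
          ((μ₀ A).toReal * Real.exp ((t : ℝ) * (-(ε t) - K θC + ρC / 2))) :=
      div_le_div₀ (Real.exp_pos _).le hnum hdpos hden
    refine hdiv.trans_eq ?_
    rw [div_eq_mul_inv, mul_inv, ← Real.exp_neg, mul_comm (Real.exp _),
      mul_assoc, ← Real.exp_add]
    ring_nf
end
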